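/- Suppose λ₀ is a point of analyticity of M_B and λ₀ lies in the closure of ρ(A_B). Then for every Φ ∈ 𝒮 and every Φ̃ ∈ 𝒮̃ there exist an open neighbourhood V of λ₀ and an analytic function g : V → ℂ such that g(λ) = ⟨(A_B − λI)^{−1}Φ, Φ̃⟩_H for all λ ∈ V ∩ ρ(A_B). The same conclusion holds for every Φ ∈ 𝒯 and every Φ̃ ∈ 𝒯̃. -/

import Mathlib

/-!
If `λ₀ ∈ ρ(A_B)` the resolvent is a Neumann series around `λ₀`. Otherwise `λ₀` is a boundary
point of `ρ(A_B)`; it then also differs from every `σ̄` with `σ ∈ ρ(Ã_{B*})`, because such a `σ`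
yields the a priori bound `‖u‖ ≤ ‖(Ã_{B*} - σ)⁻¹‖ ‖(A_B - σ̄) u‖`. For eigenvectors `v` of `T`
(eigenvalue `μ`) and `w` of `T̃`, the Green identity expresses `⟨(A_B - λ)⁻¹ v, w⟩` through
`Γ₂ (A_B - λ)⁻¹ v = (λ - μ)⁻¹ (M_B(λ) (Γ₁ v - B Γ₂ v) - Γ₂ v)`, which is analytic at `λ₀`.
The resolvent identity on the left and its Green-identity analogue on the right carry this over
to the generators of `𝒮` and `𝒮̃`; linearity does the rest.
-/

open scoped InnerProductSpace

variable {H 𝓗 𝓚 : Type*}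
  [NormedAddCommGroup H] [InnerProductSpace ℂ H] [CompleteSpace H]
  [NormedAddCommGroup 𝓗] [InnerProductSpace ℂ 𝓗] [CompleteSpace 𝓗]
  [NormedAddCommGroup 𝓚] [InnerProductSpace ℂ 𝓚] [CompleteSpace 𝓚]

/-- `R` is the (bounded, everywhere defined) inverse of `A_B − λ`, where `A_B` is the
restriction of `T` to `{u ∈ D(T) : Γ₁ u = B (Γ₂ u)}`. -/
def IsResolventAt (dom : Submodule ℂ H) (T : dom →ₗ[ℂ] H)
    (Γ₁ : dom →ₗ[ℂ] 𝓗) (Γ₂ : dom →ₗ[ℂ] 𝓚) (B : 𝓚 →L[ℂ] 𝓗)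
    (lam : ℂ) (R : H →L[ℂ] H) : Prop :=
  (∀ h : H, ∃ hm : R h ∈ dom,
      Γ₁ ⟨R h, hm⟩ = B (Γ₂ ⟨R h, hm⟩) ∧ T ⟨R h, hm⟩ - lam • R h = h) ∧
  (∀ u : dom, Γ₁ u = B (Γ₂ u) → R (T u - lam • (u : H)) = (u : H))

/-- The resolvent set `ρ(A_B)`. -/
def resolventSetB (dom : Submodule ℂ H) (T : dom →ₗ[ℂ] H)
    (Γ₁ : dom →ₗ[ℂ] 𝓗) (Γ₂ : dom →ₗ[ℂ] 𝓚) (B : 𝓚 →L[ℂ] 𝓗) : Set ℂ :=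
  {lam | ∃ R : H →L[ℂ] H, IsResolventAt dom T Γ₁ Γ₂ B lam R}

/-- The space `𝒮 = Span_{δ ∉ σ(A_B)} (A_B − δ)⁻¹ Ran (S_{μ₀,B})`. -/
def spaceS (dom : Submodule ℂ H) (T : dom →ₗ[ℂ] H)
    (Γ₁ : dom →ₗ[ℂ] 𝓗) (Γ₂ : dom →ₗ[ℂ] 𝓚) (B : 𝓚 →L[ℂ] 𝓗) (μ₀ : ℂ) :
    Submodule ℂ H :=
  Submodule.span ℂ {x : H | ∃ (δ : ℂ) (R : H →L[ℂ] H) (v : dom),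
    IsResolventAt dom T Γ₁ Γ₂ B δ R ∧ T v = μ₀ • (v : H) ∧ x = R (v : H)}

/-- The space `𝒯 = Span_{μ ∉ σ(A_B)} Ran (S_{μ,B})`. -/
def spaceT (dom : Submodule ℂ H) (T : dom →ₗ[ℂ] H)
    (Γ₁ : dom →ₗ[ℂ] 𝓗) (Γ₂ : dom →ₗ[ℂ] 𝓚) (B : 𝓚 →L[ℂ] 𝓗) :
    Submodule ℂ H :=
  Submodule.span ℂ {x : H | ∃ (μ : ℂ) (hx : x ∈ dom),
    μ ∈ resolventSetB dom T Γ₁ Γ₂ B ∧ T ⟨x, hx⟩ = μ • x}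

/-- `lam₀` is a point of analyticity of the Weyl function `M_B`: on some open
neighbourhood `U` of `lam₀`, for each `f ∈ Ran(Γ₁ − BΓ₂)` there is an analytic
function agreeing with `M_B(·) f` on `U ∩ ρ(A_B)`. -/
def MAnalyticAt (dom : Submodule ℂ H) (T : dom →ₗ[ℂ] H)
    (Γ₁ : dom →ₗ[ℂ] 𝓗) (Γ₂ : dom →ₗ[ℂ] 𝓚) (B : 𝓚 →L[ℂ] 𝓗) (lam₀ : ℂ) : Prop :=
  ∃ U : Set ℂ, IsOpen U ∧ lam₀ ∈ U ∧
    ∀ f ∈ Set.range (fun u : dom => Γ₁ u - B (Γ₂ u)),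
      ∃ m : ℂ → 𝓚, (∀ z ∈ U, AnalyticAt ℂ m z) ∧
        ∀ lam ∈ U ∩ resolventSetB dom T Γ₁ Γ₂ B,
          ∀ u : dom, (T u = lam • (u : H) ∧ Γ₁ u - B (Γ₂ u) = f) → m lam = Γ₂ u

open ComplexConjugate Filter Topology
open scoped InnerProduct

section Resolvent

variable {dom : Submodule ℂ H} {T : dom →ₗ[ℂ] H}
  {Γ₁ : dom →ₗ[ℂ] 𝓗} {Γ₂ : dom →ₗ[ℂ] 𝓚} {B : 𝓚 →L[ℂ] 𝓗} {lam δ : ℂ} {R R' : H →L[ℂ] H}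

theorem IsResolventAt.unique (hR : IsResolventAt dom T Γ₁ Γ₂ B lam R)
    (hR' : IsResolventAt dom T Γ₁ Γ₂ B lam R') : R = R' := by
  ext h
  obtain ⟨hm, hbc, heq⟩ := hR'.1 h
  simpa [heq] using hR.2 ⟨R' h, hm⟩ hbc

theorem IsResolventAt.sub_smul_apply_apply (hR : IsResolventAt dom T Γ₁ Γ₂ B lam R)
    (hR' : IsResolventAt dom T Γ₁ Γ₂ B δ R') (x : H) :
    (lam - δ) • R (R' x) = R x - R' x := by
  obtain ⟨hm, hbc, heq⟩ := hR.1 x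
  obtain ⟨hm', hbc', heq'⟩ := hR'.1 x
  let w : dom := ⟨R x, hm⟩ - ⟨R' x, hm'⟩
  have hw : T w - lam • (w : H) = (lam - δ) • R' x := by
    simp only [w, map_sub, Submodule.coe_sub]
    rw [eq_add_of_sub_eq heq, eq_add_of_sub_eq heq']
    module
  have := hR.2 w (by simp only [w, map_sub, hbc, hbc'])
  rwa [hw, map_smul] at this

theorem IsResolventAt.of_isUnit (hR : IsResolventAt dom T Γ₁ Γ₂ B δ R)
    (hu : IsUnit (1 - (lam - δ) • R)) :
    IsResolventAt dom T Γ₁ Γ₂ B lam (R * Ring.inverse (1 - (lam - δ) • R)) := by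
  set S := 1 - (lam - δ) • R with hS
  have hcomm : Commute R (Ring.inverse S) := by
    obtain ⟨u, hu⟩ := hu
    rw [← hu, Ring.inverse_unit]
    exact Commute.units_inv_right (hu ▸ (Commute.one_right R).sub_right
      ((Commute.refl R).smul_right _))
  constructor
  · intro h
    obtain ⟨hm, hbc, heq⟩ := hR.1 (Ring.inverse S h)
    refine ⟨hm, hbc, ?_⟩
    calc T ⟨_, hm⟩ - lam • R (Ring.inverse S h)
        = (T ⟨_, hm⟩ - δ • R (Ring.inverse S h)) - (lam - δ) • R (Ring.inverse S h) := by
          module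
      _ = (S * Ring.inverse S) h := by rw [heq]; simp [hS]
      _ = h := by rw [Ring.mul_inverse_cancel S hu]; rfl
  · intro u hbc
    calc (R * Ring.inverse S) (T u - lam • (u : H))
        = Ring.inverse S (R ((T u - δ • (u : H)) - (lam - δ) • (u : H))) := by
          rw [hcomm.eq, sub_sub, ← add_smul, add_sub_cancel]; rfl
      _ = (Ring.inverse S * S) u := by
          rw [map_sub, hR.2 u hbc, map_smul]; simp [hS]
      _ = u := by rw [Ring.inverse_mul_cancel S hu]; rfl

theorem IsResolventAt.opNorm_le_of_bound {lam₀ : ℂ} {C : ℝ} (hC : 0 ≤ C)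
    (hbd : ∀ u : dom, Γ₁ u = B (Γ₂ u) → ‖(u : H)‖ ≤ C * ‖T u - lam₀ • (u : H)‖)
    (hR : IsResolventAt dom T Γ₁ Γ₂ B lam R) (hlam : C * ‖lam - lam₀‖ ≤ 2⁻¹) :
    ‖R‖ ≤ 2 * C := by
  refine R.opNorm_le_bound (by positivity) fun h => ?_
  obtain ⟨hm, hbc, heq⟩ := hR.1 h
  have hsplit : T ⟨R h, hm⟩ - lam₀ • R h = h + (lam - lam₀) • R h := by
    rw [eq_add_of_sub_eq heq]; module
  have := hbd ⟨R h, hm⟩ hbc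
  rw [hsplit] at this
  have htri : ‖h + (lam - lam₀) • R h‖ ≤ ‖h‖ + ‖lam - lam₀‖ * ‖R h‖ :=
    (norm_add_le _ _).trans_eq (by rw [norm_smul])
  nlinarith [mul_le_mul_of_nonneg_left htri hC, norm_nonneg (R h)]

theorem mem_resolventSetB_of_bound {lam₀ : ℂ} {C : ℝ} (hC : 0 ≤ C)
    (hcl : lam₀ ∈ closure (resolventSetB dom T Γ₁ Γ₂ B))
    (hbd : ∀ u : dom, Γ₁ u = B (Γ₂ u) → ‖(u : H)‖ ≤ C * ‖T u - lam₀ • (u : H)‖) :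
    lam₀ ∈ resolventSetB dom T Γ₁ Γ₂ B := by
  have hnear : ∀ᶠ lam in 𝓝 lam₀, C * ‖lam - lam₀‖ < 4⁻¹ :=
    (show ContinuousAt (fun lam => C * ‖lam - lam₀‖) lam₀ by fun_prop).eventually_lt
      continuousAt_const (by norm_num)
  obtain ⟨lam, ⟨R, hR⟩, hlam⟩ := ((mem_closure_iff_frequently.1 hcl).and_eventually hnear).exists
  have hRnorm := hR.opNorm_le_of_bound hC hbd (by linarith)
  refine ⟨_, hR.of_isUnit (isUnit_one_sub_of_norm_lt_one ?_)⟩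
  rw [norm_smul, norm_sub_rev]
  nlinarith [mul_le_mul_of_nonneg_left hRnorm (norm_nonneg (lam - lam₀))]

end Resolvent

section Green

variable {dom domt : Submodule ℂ H} {T : dom →ₗ[ℂ] H} {Γ₁ : dom →ₗ[ℂ] 𝓗} {Γ₂ : dom →ₗ[ℂ] 𝓚}
  {Tt : domt →ₗ[ℂ] H} {Γt₁ : domt →ₗ[ℂ] 𝓚} {Γt₂ : domt →ₗ[ℂ] 𝓗} {B : 𝓚 →L[ℂ] 𝓗}
  {lam σ : ℂ} {R Rt : H →L[ℂ] H}

def GreenIdentity (T : dom →ₗ[ℂ] H) (Γ₁ : dom →ₗ[ℂ] 𝓗) (Γ₂ : dom →ₗ[ℂ] 𝓚)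
    (Tt : domt →ₗ[ℂ] H) (Γt₁ : domt →ₗ[ℂ] 𝓚) (Γt₂ : domt →ₗ[ℂ] 𝓗) : Prop :=
  ∀ (u : dom) (v : domt),
    ⟪(v : H), T u⟫_ℂ - ⟪Tt v, (u : H)⟫_ℂ = ⟪Γt₂ v, Γ₁ u⟫_ℂ - ⟪Γt₁ v, Γ₂ u⟫_ℂ

theorem GreenIdentity.inner_sub_inner_of_bc (hG : GreenIdentity T Γ₁ Γ₂ Tt Γt₁ Γt₂)
    {u : dom} (hu : Γ₁ u = B (Γ₂ u)) (v : domt) :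
    ⟪(v : H), T u⟫_ℂ - ⟪Tt v, (u : H)⟫_ℂ = -⟪Γt₁ v - (B†) (Γt₂ v), Γ₂ u⟫_ℂ := by
  rw [hG u v, hu, inner_sub_left, ContinuousLinearMap.adjoint_inner_left]
  ring

theorem GreenIdentity.inner_eq_of_bc (hG : GreenIdentity T Γ₁ Γ₂ Tt Γt₁ Γt₂)
    {u : dom} (hu : Γ₁ u = B (Γ₂ u)) {v : domt} (hv : Γt₁ v = (B†) (Γt₂ v)) :
    ⟪(v : H), T u⟫_ℂ = ⟪Tt v, (u : H)⟫_ℂ := by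
  simpa [sub_eq_zero.2 hv, sub_eq_zero] using hG.inner_sub_inner_of_bc hu v

/-- `R_λ - R̃_σ^* = (λ - σ̄) R̃_σ^* R_λ`: the Green-identity analogue of the resolvent identity. -/
theorem GreenIdentity.sub_conj_mul_inner_resolvent (hG : GreenIdentity T Γ₁ Γ₂ Tt Γt₁ Γt₂)
    (hR : IsResolventAt dom T Γ₁ Γ₂ B lam R)
    (hRt : IsResolventAt domt Tt Γt₁ Γt₂ (B†) σ Rt) (Φ Φt : H) :
    (lam - conj σ) * ⟪Rt Φt, R Φ⟫_ℂ = ⟪Φt, R Φ⟫_ℂ - ⟪Rt Φt, Φ⟫_ℂ := by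
  obtain ⟨hu, hbcu, hequ⟩ := hR.1 Φ
  obtain ⟨hv, hbcv, heqv⟩ := hRt.1 Φt
  have h := hG.inner_eq_of_bc hbcu hbcv
  rw [eq_add_of_sub_eq hequ, eq_add_of_sub_eq heqv] at h
  simp only [inner_add_left, inner_add_right, inner_smul_left, inner_smul_right] at h
  linear_combination h

theorem GreenIdentity.norm_le (hG : GreenIdentity T Γ₁ Γ₂ Tt Γt₁ Γt₂)
    (hRt : IsResolventAt domt Tt Γt₁ Γt₂ (B†) σ Rt) {u : dom} (hu : Γ₁ u = B (Γ₂ u)) :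
    ‖(u : H)‖ ≤ ‖Rt‖ * ‖T u - conj σ • (u : H)‖ := by
  obtain ⟨hv, hbcv, heqv⟩ := hRt.1 u
  have h := hG.inner_eq_of_bc hu hbcv
  rw [eq_add_of_sub_eq heqv, inner_add_left, inner_smul_left] at h
  have key : ⟪Rt u, T u - conj σ • (u : H)⟫_ℂ = ⟪(u : H), u⟫_ℂ := by
    rw [inner_sub_right, inner_smul_right, h]; ring
  have hsq : ‖(u : H)‖ * ‖(u : H)‖ ≤ ‖Rt‖ * ‖T u - conj σ • (u : H)‖ * ‖(u : H)‖ :=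
    calc ‖(u : H)‖ * ‖(u : H)‖ = ‖⟪Rt u, T u - conj σ • (u : H)⟫_ℂ‖ := by
          rw [key, inner_self_eq_norm_sq_to_K]; simp [sq]
      _ ≤ ‖Rt u‖ * ‖T u - conj σ • (u : H)‖ := norm_inner_le_norm _ _
      _ ≤ ‖Rt‖ * ‖(u : H)‖ * ‖T u - conj σ • (u : H)‖ := by gcongr; exact Rt.le_opNorm _
      _ = ‖Rt‖ * ‖T u - conj σ • (u : H)‖ * ‖(u : H)‖ := by ring
  rcases (norm_nonneg (u : H)).eq_or_lt with h0 | hpos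
  · rw [← h0]; positivity
  · exact le_of_mul_le_mul_right hsq hpos

theorem GreenIdentity.ne_conj (hG : GreenIdentity T Γ₁ Γ₂ Tt Γt₁ Γt₂) {lam₀ : ℂ}
    (hcl : lam₀ ∈ closure (resolventSetB dom T Γ₁ Γ₂ B))
    (hnot : lam₀ ∉ resolventSetB dom T Γ₁ Γ₂ B)
    (hRt : IsResolventAt domt Tt Γt₁ Γt₂ (B†) σ Rt) : lam₀ ≠ conj σ := by
  rintro rfl
  exact hnot (mem_resolventSetB_of_bound (norm_nonneg Rt) hcl fun u hu => hG.norm_le hRt hu)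

end Green

/-- `λ ↦ ⟨(A_B - λ)⁻¹ Φ, Φt⟩`, which is only defined on `ρ(A_B)`, agrees there near `lam₀` with
a function analytic at `lam₀`. -/
def ResolventInnerAnalyticAt (dom : Submodule ℂ H) (T : dom →ₗ[ℂ] H)
    (Γ₁ : dom →ₗ[ℂ] 𝓗) (Γ₂ : dom →ₗ[ℂ] 𝓚) (B : 𝓚 →L[ℂ] 𝓗) (lam₀ : ℂ) (Φ Φt : H) : Prop :=
  ∃ g : ℂ → ℂ, AnalyticAt ℂ g lam₀ ∧
    ∀ᶠ lam in 𝓝 lam₀, ∀ R : H →L[ℂ] H, IsResolventAt dom T Γ₁ Γ₂ B lam R → g lam = ⟪Φt, R Φ⟫_ℂ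

namespace ResolventInnerAnalyticAt

variable {dom domt : Submodule ℂ H} {T : dom →ₗ[ℂ] H} {Γ₁ : dom →ₗ[ℂ] 𝓗} {Γ₂ : dom →ₗ[ℂ] 𝓚}
  {Tt : domt →ₗ[ℂ] H} {Γt₁ : domt →ₗ[ℂ] 𝓚} {Γt₂ : domt →ₗ[ℂ] 𝓗} {B : 𝓚 →L[ℂ] 𝓗}
  {lam₀ : ℂ} {Φ Φ' Φt Φt' : H}

theorem zero_left : ResolventInnerAnalyticAt dom T Γ₁ Γ₂ B lam₀ 0 Φt :=
  ⟨0, analyticAt_const, .of_forall fun _ _ _ => by simp⟩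

theorem zero_right : ResolventInnerAnalyticAt dom T Γ₁ Γ₂ B lam₀ Φ 0 :=
  ⟨0, analyticAt_const, .of_forall fun _ _ _ => by simp⟩

theorem add_left (h : ResolventInnerAnalyticAt dom T Γ₁ Γ₂ B lam₀ Φ Φt)
    (h' : ResolventInnerAnalyticAt dom T Γ₁ Γ₂ B lam₀ Φ' Φt) :
    ResolventInnerAnalyticAt dom T Γ₁ Γ₂ B lam₀ (Φ + Φ') Φt := by
  obtain ⟨g, hg, hev⟩ := h
  obtain ⟨g', hg', hev'⟩ := h'
  refine ⟨g + g', hg.add hg', ?_⟩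
  filter_upwards [hev, hev'] with lam he he' R hR
  simp only [Pi.add_apply, he R hR, he' R hR, map_add, inner_add_right]

theorem add_right (h : ResolventInnerAnalyticAt dom T Γ₁ Γ₂ B lam₀ Φ Φt)
    (h' : ResolventInnerAnalyticAt dom T Γ₁ Γ₂ B lam₀ Φ Φt') :
    ResolventInnerAnalyticAt dom T Γ₁ Γ₂ B lam₀ Φ (Φt + Φt') := by
  obtain ⟨g, hg, hev⟩ := h
  obtain ⟨g', hg', hev'⟩ := h'
  refine ⟨g + g', hg.add hg', ?_⟩
  filter_upwards [hev, hev'] with lam he he' R hR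
  simp only [Pi.add_apply, he R hR, he' R hR, inner_add_left]

theorem smul_left (c : ℂ) (h : ResolventInnerAnalyticAt dom T Γ₁ Γ₂ B lam₀ Φ Φt) :
    ResolventInnerAnalyticAt dom T Γ₁ Γ₂ B lam₀ (c • Φ) Φt := by
  obtain ⟨g, hg, hev⟩ := h
  refine ⟨fun lam => c * g lam, analyticAt_const.mul hg, ?_⟩
  filter_upwards [hev] with lam he R hR
  rw [he R hR, map_smul, inner_smul_right]

theorem smul_right (c : ℂ) (h : ResolventInnerAnalyticAt dom T Γ₁ Γ₂ B lam₀ Φ Φt) :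
    ResolventInnerAnalyticAt dom T Γ₁ Γ₂ B lam₀ Φ (c • Φt) := by
  obtain ⟨g, hg, hev⟩ := h
  refine ⟨fun lam => conj c * g lam, analyticAt_const.mul hg, ?_⟩
  filter_upwards [hev] with lam he R hR
  rw [he R hR, inner_smul_left]

theorem of_mem_span {s t : Set H}
    (h : ∀ x ∈ s, ∀ y ∈ t, ResolventInnerAnalyticAt dom T Γ₁ Γ₂ B lam₀ x y) :
    ∀ Φ ∈ Submodule.span ℂ s, ∀ Φt ∈ Submodule.span ℂ t,
      ResolventInnerAnalyticAt dom T Γ₁ Γ₂ B lam₀ Φ Φt := by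
  intro Φ hΦ Φt hΦt
  induction hΦ using Submodule.span_induction with
  | mem x hx =>
    induction hΦt using Submodule.span_induction with
    | mem y hy => exact h x hx y hy
    | zero => exact zero_right
    | add _ _ _ _ hy hy' => exact hy.add_right hy'
    | smul c _ _ hy => exact hy.smul_right c
  | zero => exact zero_left
  | add _ _ _ _ hx hx' => exact hx.add_left hx'
  | smul c _ _ hx => exact hx.smul_left c

theorem exists_isOpen (h : ResolventInnerAnalyticAt dom T Γ₁ Γ₂ B lam₀ Φ Φt) :
    ∃ (V : Set ℂ) (g : ℂ → ℂ), IsOpen V ∧ lam₀ ∈ V ∧ (∀ z ∈ V, AnalyticAt ℂ g z) ∧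
      ∀ lam ∈ V ∩ resolventSetB dom T Γ₁ Γ₂ B,
        ∀ R : H →L[ℂ] H, IsResolventAt dom T Γ₁ Γ₂ B lam R → g lam = ⟪Φt, R Φ⟫_ℂ := by
  obtain ⟨g, hg, hev⟩ := h
  obtain ⟨V, hV, hVo, hV0⟩ := eventually_nhds_iff.1 (hg.eventually_analyticAt.and hev)
  exact ⟨V, g, hVo, hV0, fun z hz => (hV z hz).1, fun lam hlam => (hV lam hlam.1).2⟩

/-- Near a point of `ρ(A_B)` the resolvent is given by a Neumann series. -/
theorem of_mem_resolventSetB (h₀ : lam₀ ∈ resolventSetB dom T Γ₁ Γ₂ B) (Φ Φt : H) :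
    ResolventInnerAnalyticAt dom T Γ₁ Γ₂ B lam₀ Φ Φt := by
  obtain ⟨R₀, hR₀⟩ := h₀
  have hinv : AnalyticAt ℂ (fun z : ℂ => Ring.inverse (1 - (z - lam₀) • R₀)) lam₀ :=
    AnalyticAt.comp (g := fun S : H →L[ℂ] H => Ring.inverse (1 - S))
      (by simpa using analyticAt_inverse_one_sub (𝕜 := ℂ) (A := H →L[ℂ] H)) (by fun_prop)
  have hunit : ∀ᶠ z in 𝓝 lam₀, IsUnit (1 - (z - lam₀) • R₀) :=
    (show ContinuousAt (fun z : ℂ => 1 - (z - lam₀) • R₀) lam₀ by fun_prop).eventually_mem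
      (Units.isOpen.mem_nhds (by simp))
  refine ⟨fun z => ⟪Φt, R₀ (Ring.inverse (1 - (z - lam₀) • R₀) Φ)⟫_ℂ,
    ((innerSL ℂ Φt).analyticAt _).comp <| (R₀.analyticAt _).comp <|
      ((ContinuousLinearMap.apply ℂ H Φ).analyticAt _).comp hinv, ?_⟩
  filter_upwards [hunit] with z hz R hR
  rw [← (hR₀.of_isUnit hz).unique hR]
  rfl

theorem resolvent_left {δ : ℂ} {Rδ : H →L[ℂ] H}
    (h : ResolventInnerAnalyticAt dom T Γ₁ Γ₂ B lam₀ Φ Φt)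
    (hRδ : IsResolventAt dom T Γ₁ Γ₂ B δ Rδ) (hδ : lam₀ ≠ δ) :
    ResolventInnerAnalyticAt dom T Γ₁ Γ₂ B lam₀ (Rδ Φ) Φt := by
  obtain ⟨g, hg, hev⟩ := h
  refine ⟨fun lam => (lam - δ)⁻¹ * (g lam - ⟪Φt, Rδ Φ⟫_ℂ),
    (by fun_prop : AnalyticAt ℂ (fun lam : ℂ => lam - δ) lam₀).inv (sub_ne_zero.2 hδ)
      |>.mul (hg.sub analyticAt_const), ?_⟩
  filter_upwards [hev, eventually_ne_nhds hδ] with lam he hne R hR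
  rw [he R hR, ← inner_sub_right, ← hR.sub_smul_apply_apply hRδ, inner_smul_right,
    inv_mul_cancel_left₀ (sub_ne_zero.2 hne)]

theorem resolvent_right (hG : GreenIdentity T Γ₁ Γ₂ Tt Γt₁ Γt₂) {σ : ℂ} {Rt : H →L[ℂ] H}
    (h : ResolventInnerAnalyticAt dom T Γ₁ Γ₂ B lam₀ Φ Φt)
    (hRt : IsResolventAt domt Tt Γt₁ Γt₂ (B†) σ Rt) (hσ : lam₀ ≠ conj σ) :
    ResolventInnerAnalyticAt dom T Γ₁ Γ₂ B lam₀ Φ (Rt Φt) := by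
  obtain ⟨g, hg, hev⟩ := h
  refine ⟨fun lam => (lam - conj σ)⁻¹ * (g lam - ⟪Rt Φt, Φ⟫_ℂ),
    (by fun_prop : AnalyticAt ℂ (fun lam : ℂ => lam - conj σ) lam₀).inv (sub_ne_zero.2 hσ)
      |>.mul (hg.sub analyticAt_const), ?_⟩
  filter_upwards [hev, eventually_ne_nhds hσ] with lam he hne R hR
  rw [he R hR, ← hG.sub_conj_mul_inner_resolvent hR hRt, inv_mul_cancel_left₀ (sub_ne_zero.2 hne)]

end ResolventInnerAnalyticAt

/-- `Γ₂ (A_B - λ)⁻¹ v` extends analytically to `lam₀` for an eigenvector `v` of `T`: writing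
`u = v + (λ - μ) (A_B - λ)⁻¹ v`, one has `T u = λ u` with the boundary data of `v`, so
`Γ₂ u = M_B(λ) (Γ₁ v - B Γ₂ v)`. -/
theorem MAnalyticAt.exists_gamma₂_resolvent {dom : Submodule ℂ H} {T : dom →ₗ[ℂ] H}
    {Γ₁ : dom →ₗ[ℂ] 𝓗} {Γ₂ : dom →ₗ[ℂ] 𝓚} {B : 𝓚 →L[ℂ] 𝓗} {lam₀ μ : ℂ} {v : dom}
    (hM : MAnalyticAt dom T Γ₁ Γ₂ B lam₀) (hv : T v = μ • (v : H)) (hμ : lam₀ ≠ μ) :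
    ∃ k : ℂ → 𝓚, AnalyticAt ℂ k lam₀ ∧ ∀ᶠ lam in 𝓝 lam₀, ∀ R : H →L[ℂ] H,
      IsResolventAt dom T Γ₁ Γ₂ B lam R → ∀ hRv : R v ∈ dom, Γ₂ ⟨R v, hRv⟩ = k lam := by
  obtain ⟨U, hU, hU₀, hMU⟩ := hM
  obtain ⟨m, hm, hmv⟩ := hMU _ ⟨v, rfl⟩
  refine ⟨fun lam => (lam - μ)⁻¹ • (m lam - Γ₂ v),
    ((by fun_prop : AnalyticAt ℂ (fun lam : ℂ => lam - μ) lam₀).inv (sub_ne_zero.2 hμ)).smul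
      ((hm lam₀ hU₀).sub analyticAt_const), ?_⟩
  filter_upwards [hU.mem_nhds hU₀, eventually_ne_nhds hμ] with lam hlamU hne R hR hRv
  obtain ⟨_, hbc, heq⟩ := hR.1 v
  set w : dom := ⟨R v, hRv⟩
  have hTu : T (v + (lam - μ) • w) = lam • ((v + (lam - μ) • w : dom) : H) := by
    rw [map_add, map_smul, hv, eq_add_of_sub_eq heq]
    simp only [Submodule.coe_add, Submodule.coe_smul, w]
    module
  have hbdry : Γ₁ (v + (lam - μ) • w) - B (Γ₂ (v + (lam - μ) • w)) = Γ₁ v - B (Γ₂ v) := by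
    simp only [map_add, map_smul, w, hbc]
    abel
  rw [hmv lam ⟨hlamU, R, hR⟩ _ ⟨hTu, hbdry⟩, map_add, map_smul, add_sub_cancel_left,
    inv_smul_smul₀ (sub_ne_zero.2 hne)]

theorem ResolventInnerAnalyticAt.of_eigen {dom domt : Submodule ℂ H} {T : dom →ₗ[ℂ] H}
    {Γ₁ : dom →ₗ[ℂ] 𝓗} {Γ₂ : dom →ₗ[ℂ] 𝓚} {Tt : domt →ₗ[ℂ] H} {Γt₁ : domt →ₗ[ℂ] 𝓚}
    {Γt₂ : domt →ₗ[ℂ] 𝓗} {B : 𝓚 →L[ℂ] 𝓗} {lam₀ μ ν : ℂ} {v : dom} {w : domt}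
    (hG : GreenIdentity T Γ₁ Γ₂ Tt Γt₁ Γt₂) (hM : MAnalyticAt dom T Γ₁ Γ₂ B lam₀)
    (hv : T v = μ • (v : H)) (hμ : lam₀ ≠ μ) (hw : Tt w = ν • (w : H)) (hν : lam₀ ≠ conj ν) :
    ResolventInnerAnalyticAt dom T Γ₁ Γ₂ B lam₀ v w := by
  obtain ⟨k, hk, hev⟩ := hM.exists_gamma₂_resolvent hv hμ
  set β := Γt₁ w - (B†) (Γt₂ w)
  refine ⟨fun lam => (lam - conj ν)⁻¹ * (-⟪β, k lam⟫_ℂ - ⟪(w : H), v⟫_ℂ),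
    ((by fun_prop : AnalyticAt ℂ (fun lam : ℂ => lam - conj ν) lam₀).inv (sub_ne_zero.2 hν)).mul
      ((((innerSL ℂ β).analyticAt _).comp hk).neg.sub analyticAt_const), ?_⟩
  filter_upwards [hev, eventually_ne_nhds hν] with lam he hne R hR
  obtain ⟨hRv, hbc, heq⟩ := hR.1 v
  have h := hG.inner_sub_inner_of_bc hbc w
  rw [he R hR hRv, eq_add_of_sub_eq heq, hw] at h
  simp only [inner_add_right, inner_smul_right, inner_smul_left] at h
  rw [show -⟪β, k lam⟫_ℂ - ⟪(w : H), v⟫_ℂ = (lam - conj ν) * ⟪(w : H), R v⟫_ℂ by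
    linear_combination -h, inv_mul_cancel_left₀ (sub_ne_zero.2 hne)]

theorem stmt6 (dom : Submodule ℂ H) (T : dom →ₗ[ℂ] H)
    (Γ₁ : dom →ₗ[ℂ] 𝓗) (Γ₂ : dom →ₗ[ℂ] 𝓚) (B : 𝓚 →L[ℂ] 𝓗)
    (domt : Submodule ℂ H) (Tt : domt →ₗ[ℂ] H)
    (Γt₁ : domt →ₗ[ℂ] 𝓚) (Γt₂ : domt →ₗ[ℂ] 𝓗)
    -- Green identity (paper inner products are linear in the first argument;
    -- Mathlib's `⟪·,·⟫_ℂ` is linear in the second, whence the reversed order)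
    (hGreen : ∀ (u : dom) (v : domt),
      ⟪(v : H), T u⟫_ℂ - ⟪Tt v, (u : H)⟫_ℂ = ⟪Γt₂ v, Γ₁ u⟫_ℂ - ⟪Γt₁ v, Γ₂ u⟫_ℂ)
    (μ₀ : ℂ) (hμ₀ : μ₀ ∈ resolventSetB dom T Γ₁ Γ₂ B)
    (μt₀ : ℂ)
    (hμt₀ : μt₀ ∈ resolventSetB domt Tt Γt₁ Γt₂ (ContinuousLinearMap.adjoint B))
    (lam₀ : ℂ)
    (hM : MAnalyticAt dom T Γ₁ Γ₂ B lam₀)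
    (hcl : lam₀ ∈ closure (resolventSetB dom T Γ₁ Γ₂ B)) :
    -- bordered resolvent is analytic near `lam₀` against elements of `𝒮` and `𝒮̃`
    (∀ Φ ∈ spaceS dom T Γ₁ Γ₂ B μ₀,
      ∀ Φt ∈ spaceS domt Tt Γt₁ Γt₂ (ContinuousLinearMap.adjoint B) μt₀,
        ∃ (V : Set ℂ) (g : ℂ → ℂ), IsOpen V ∧ lam₀ ∈ V ∧
          (∀ z ∈ V, AnalyticAt ℂ g z) ∧
          ∀ lam ∈ V ∩ resolventSetB dom T Γ₁ Γ₂ B,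
            ∀ R : H →L[ℂ] H, IsResolventAt dom T Γ₁ Γ₂ B lam R →
              g lam = ⟪Φt, R Φ⟫_ℂ) ∧
    -- and likewise for elements of `𝒯` and `𝒯̃`
    (∀ Φ ∈ spaceT dom T Γ₁ Γ₂ B,
      ∀ Φt ∈ spaceT domt Tt Γt₁ Γt₂ (ContinuousLinearMap.adjoint B),
        ∃ (V : Set ℂ) (g : ℂ → ℂ), IsOpen V ∧ lam₀ ∈ V ∧
          (∀ z ∈ V, AnalyticAt ℂ g z) ∧
          ∀ lam ∈ V ∩ resolventSetB dom T Γ₁ Γ₂ B,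
            ∀ R : H →L[ℂ] H, IsResolventAt dom T Γ₁ Γ₂ B lam R →
              g lam = ⟪Φt, R Φ⟫_ℂ) := by
  by_cases hρ : lam₀ ∈ resolventSetB dom T Γ₁ Γ₂ B
  · exact ⟨fun Φ _ Φt _ => (ResolventInnerAnalyticAt.of_mem_resolventSetB hρ Φ Φt).exists_isOpen,
      fun Φ _ Φt _ => (ResolventInnerAnalyticAt.of_mem_resolventSetB hρ Φ Φt).exists_isOpen⟩
  have hG : GreenIdentity T Γ₁ Γ₂ Tt Γt₁ Γt₂ := hGreen
  have hne : ∀ {μ}, μ ∈ resolventSetB dom T Γ₁ Γ₂ B → lam₀ ≠ μ := fun hμ h => hρ (h ▸ hμ)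
  have hne_conj : ∀ {σ}, σ ∈ resolventSetB domt Tt Γt₁ Γt₂ (B†) → lam₀ ≠ conj σ :=
    fun ⟨_, hRt⟩ => hG.ne_conj hcl hρ hRt
  refine ⟨fun Φ hΦ Φt hΦt => (ResolventInnerAnalyticAt.of_mem_span ?_ Φ hΦ Φt hΦt).exists_isOpen,
    fun Φ hΦ Φt hΦt => (ResolventInnerAnalyticAt.of_mem_span ?_ Φ hΦ Φt hΦt).exists_isOpen⟩
  · rintro _ ⟨δ, Rδ, v, hRδ, hv, rfl⟩ _ ⟨σ, Rt, w, hRt, hw, rfl⟩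
    exact ((ResolventInnerAnalyticAt.of_eigen hG hM hv (hne hμ₀) hw (hne_conj hμt₀)).resolvent_left
      hRδ (hne ⟨Rδ, hRδ⟩)).resolvent_right hG hRt (hne_conj ⟨Rt, hRt⟩)
  · rintro x ⟨μ, hx, hμ, hv⟩ y ⟨ν, hy, hν, hw⟩
    exact ResolventInnerAnalyticAt.of_eigen hG hM hv (hne hμ) hw (hne_conj hν)
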